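/- arXiv:2304.08944 — 7 statements merged into one kernel-verified Lean document; each statement's English description precedes it below -/
import Mathlib

section
/- There is an absolute constant C > 0 such that the following holds. Let F be a class of functions from a set X to [0,1], f* ∈ F, and z₁,…,z_N ∈ X fixed points; write Z_N = (z₁,…,z_N). Let l₁,…,l_N be independent {0,1}-valued random variables with E[l_k] = f*(z_k) for each k, and let f̃ ∈ argmin_{f∈F} Σ_{k=1}^N (f(z_k) − l_k)². Then for any δ ∈ (0,1), with probability at least 1 − δ, ‖f̃ − f*‖_{Z_N} ≤ C·√(log(2/δ) + log N(F, 1/N)). -/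
/-!
Restrict everything to the sample: let `p`, `y` and `a` in `ℝ^N` be the values of `f*`, of the
labels and of `f̃` at `z₁, …, z_N`. Minimality of `f̃` gives the basic inequality
`‖a - p‖² ≤ 2⟪a - p, y - p⟫`. Replacing `f̃` by the nearest element `g` of a minimal `1/N`-cover
changes the right-hand side by at most `2`. For each fixed `g` of the cover, `⟪g - p, y - p⟫` is a
sum of independent centred bounded variables, so by Hoeffding it exceeds `‖g - p‖ √(L/2)`, with
`L = log (2M/δ)`, only with probability `δ/(2M)`. Off the union of these `M` events,
`‖a - p‖² ≤ 2 (√(L/2) (‖a - p‖ + 1) + 1)`, and solving this quadratic inequality gives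
`‖a - p‖ ≤ 5 √(L/2) ≤ 4 √L`.
-/

open MeasureTheory ProbabilityTheory

/-- The covering number `N(F, ε)`: the minimal cardinality of a subset `C ⊆ F` such that
every `f ∈ F` has `f' ∈ C` with `‖f − f'‖_∞ ≤ ε`. -/
noncomputable def coveringNumber {X : Type*} (F : Set (X → ℝ)) (ε : ℝ) : ℕ∞ :=
  sInf {n : ℕ∞ | ∃ C : Finset (X → ℝ), ↑C ⊆ F ∧
    (∀ f ∈ F, ∃ f' ∈ C, ∀ x, |f x - f' x| ≤ ε) ∧ (C.card : ℕ∞) = n}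

open Real
open scoped NNReal InnerProductSpace

section Concentration

variable {Ω : Type*} [MeasurableSpace Ω] {μ : Measure Ω}

lemma measureReal_lt_sum_le_of_iIndepFun {ι : Type*} {X : ι → Ω → ℝ}
    (h_indep : iIndepFun X μ) {c : ι → ℝ≥0} {s : Finset ι}
    (h_subG : ∀ i ∈ s, HasSubgaussianMGF (X i) (c i) μ) {L : ℝ} (hL : 0 ≤ L) :
    μ.real {ω | √(2 * (∑ i ∈ s, c i : ℝ≥0) * L) < ∑ i ∈ s, X i ω} ≤ exp (-L) := by
  have := h_indep.isProbabilityMeasure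
  have h_sum := HasSubgaussianMGF.sum_of_iIndepFun h_indep h_subG
  rcases eq_or_ne (∑ i ∈ s, c i) 0 with hc | hc
  -- for a vanishing variance proxy the Chernoff bound reads `exp (-ε ^ 2 / 0) = 1`
  · rw [hc] at h_sum
    have hnull : μ {ω | √(2 * (∑ i ∈ s, c i : ℝ≥0) * L) < ∑ i ∈ s, X i ω} = 0 := by
      rw [measure_eq_zero_iff_ae_notMem]
      filter_upwards [h_sum.ae_eq_zero_of_hasSubgaussianMGF_zero] with ω hω
      simp_all
    rw [measureReal_def, hnull]
    positivity
  · have hsub : {ω | √(2 * (∑ i ∈ s, c i : ℝ≥0) * L) < ∑ i ∈ s, X i ω}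
        ⊆ {ω | √(2 * (∑ i ∈ s, c i : ℝ≥0) * L) ≤ ∑ i ∈ s, X i ω} :=
      Set.ofPred_subset_ofPred.mpr fun _ => le_of_lt
    refine (measureReal_mono hsub).trans ((h_sum.measure_ge_le (by positivity)).trans_eq ?_)
    have hc' : (0 : ℝ) < ∑ i ∈ s, c i := by positivity
    rw [sq_sqrt (by positivity)]
    field_simp

lemma measureReal_lt_inner_le_of_iIndepFun [IsProbabilityMeasure μ] {ι : Type*} [Fintype ι]
    {Y : ι → Ω → ℝ} (h_indep : iIndepFun Y μ) (hm : ∀ i, AEMeasurable (Y i) μ) {a b : ℝ}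
    (hb : ∀ i, ∀ᵐ ω ∂μ, Y i ω ∈ Set.Icc a b) (w : EuclideanSpace ℝ ι) {L : ℝ} (hL : 0 ≤ L) :
    μ.real {ω | ‖w‖ * |b - a| * √(L / 2) < ⟪w, WithLp.toLp 2 (fun i => Y i ω - μ[Y i])⟫_ℝ}
      ≤ exp (-L) := by
  let c : ι → ℝ≥0 := fun i => ⟨w i ^ 2, sq_nonneg _⟩ * (‖b - a‖₊ / 2) ^ 2
  have h_subG : ∀ i ∈ Finset.univ,
      HasSubgaussianMGF (fun ω => w i * (Y i ω - μ[Y i])) (c i) μ :=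
    fun i _ => (hasSubgaussianMGF_of_mem_Icc (hm i) (hb i)).const_mul (w i)
  have h_indep' : iIndepFun (fun i ω => w i * (Y i ω - μ[Y i])) μ :=
    h_indep.comp (fun i y => w i * (y - ∫ ω, Y i ω ∂μ)) fun i => by fun_prop
  have hc : √(2 * (∑ i, c i : ℝ≥0) * L) = ‖w‖ * |b - a| * √(L / 2) := by
    have hsum : ((∑ i, c i : ℝ≥0) : ℝ) = ‖w‖ ^ 2 * (|b - a| / 2) ^ 2 := by
      rw [EuclideanSpace.norm_sq_eq, Finset.sum_mul, NNReal.coe_sum]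
      exact Finset.sum_congr rfl fun i _ => by
        change (w i ^ 2 : ℝ) * ((‖b - a‖₊ : ℝ) / 2) ^ 2 = _
        simp
    rw [hsum, show 2 * (‖w‖ ^ 2 * (|b - a| / 2) ^ 2) * L = (‖w‖ * |b - a|) ^ 2 * (L / 2) by ring,
      sqrt_mul (by positivity), sqrt_sq (by positivity)]
  convert measureReal_lt_sum_le_of_iIndepFun h_indep' h_subG hL using 4 with ω
  rw [hc]
  simp [PiLp.inner_apply, mul_comm]

lemma measure_exists_lt_inner_le_of_iIndepFun [IsProbabilityMeasure μ] {ι : Type*} [Fintype ι]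
    {Y : ι → Ω → ℝ} (h_indep : iIndepFun Y μ) (hm : ∀ i, AEMeasurable (Y i) μ) {a b : ℝ}
    (hb : ∀ i, ∀ᵐ ω ∂μ, Y i ω ∈ Set.Icc a b) {α : Type*} (J : Finset α)
    (w : α → EuclideanSpace ℝ ι) {L : ℝ} (hL : 0 ≤ L) :
    μ {ω | ∃ j ∈ J,
        ‖w j‖ * |b - a| * √(L / 2) < ⟪w j, WithLp.toLp 2 (fun i => Y i ω - μ[Y i])⟫_ℝ}
      ≤ J.card * ENNReal.ofReal (exp (-L)) := by
  have hunion : {ω | ∃ j ∈ J,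
      ‖w j‖ * |b - a| * √(L / 2) < ⟪w j, WithLp.toLp 2 (fun i => Y i ω - μ[Y i])⟫_ℝ} =
      ⋃ j ∈ J, {ω | ‖w j‖ * |b - a| * √(L / 2) <
        ⟪w j, WithLp.toLp 2 (fun i => Y i ω - μ[Y i])⟫_ℝ} := by
    ext ω; simp
  rw [hunion, ← nsmul_eq_mul]
  refine (measure_biUnion_finset_le _ _).trans (Finset.sum_le_card_nsmul _ _ _ fun j _ => ?_)
  rw [← ofReal_measureReal]
  exact ENNReal.ofReal_le_ofReal (measureReal_lt_inner_le_of_iIndepFun h_indep hm hb (w j) hL)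

lemma ofReal_one_sub_le_of_measure_compl_le [IsProbabilityMeasure μ] {s : Set Ω} {δ : ℝ}
    (hδ : 0 ≤ δ) (h : μ sᶜ ≤ ENNReal.ofReal δ) :
    ENNReal.ofReal (1 - δ) ≤ μ s := by
  rw [ENNReal.ofReal_sub _ hδ, ENNReal.ofReal_one]
  calc 1 - ENNReal.ofReal δ ≤ 1 - μ sᶜ := tsub_le_tsub_left h 1
    _ ≤ μ s := by
      rw [tsub_le_iff_right, ← measure_univ (μ := μ)]
      exact measure_univ_le_add_compl s

end Concentration

section LeastSquares

variable {E : Type*} [NormedAddCommGroup E] [InnerProductSpace ℝ E]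

lemma norm_sub_sq_le_two_inner_of_norm_sub_le {a p y : E} (h : ‖a - y‖ ≤ ‖p - y‖) :
    ‖a - p‖ ^ 2 ≤ 2 * ⟪a - p, y - p⟫_ℝ := by
  have h2 : ‖a - y‖ ^ 2 ≤ ‖p - y‖ ^ 2 := pow_le_pow_left₀ (norm_nonneg _) h 2
  rw [show a - y = (a - p) - (y - p) by abel, norm_sub_sq_real, ← norm_neg (p - y),
    neg_sub] at h2
  linarith

lemma norm_sub_le_of_norm_sub_le_of_inner_le {a p y g : E} {b : ℝ} (hb : 1 / 2 ≤ b)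
    (hmin : ‖a - y‖ ≤ ‖p - y‖) (hag : ‖a - g‖ ≤ 1) (hag' : ⟪a - g, y - p⟫_ℝ ≤ 1)
    (hg : ⟪g - p, y - p⟫_ℝ ≤ ‖g - p‖ * b) :
    ‖a - p‖ ≤ 5 * b := by
  have hbasic := norm_sub_sq_le_two_inner_of_norm_sub_le hmin
  have hsplit : ⟪a - p, y - p⟫_ℝ = ⟪g - p, y - p⟫_ℝ + ⟪a - g, y - p⟫_ℝ := by
    rw [← inner_add_left, sub_add_sub_cancel']
  have htri : ‖g - p‖ ≤ ‖a - p‖ + 1 := by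
    calc ‖g - p‖ = ‖(a - p) - (a - g)‖ := by rw [sub_sub_sub_cancel_left]
      _ ≤ ‖a - p‖ + ‖a - g‖ := norm_sub_le _ _
      _ ≤ ‖a - p‖ + 1 := by gcongr
  have hquad : ‖a - p‖ ^ 2 ≤ 2 * (b * (‖a - p‖ + 1) + 1) := by
    nlinarith
  nlinarith [norm_nonneg (a - p)]

end LeastSquares

lemma exists_finset_card_eq_of_coveringNumber_eq {X : Type*} {F : Set (X → ℝ)} {ε : ℝ} {M : ℕ}
    (h : coveringNumber F ε = M) :
    ∃ C : Finset (X → ℝ), ↑C ⊆ F ∧ (∀ f ∈ F, ∃ f' ∈ C, ∀ x, |f x - f' x| ≤ ε) ∧ C.card = M := by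
  have hne : {n : ℕ∞ | ∃ C : Finset (X → ℝ), ↑C ⊆ F ∧
      (∀ f ∈ F, ∃ f' ∈ C, ∀ x, |f x - f' x| ≤ ε) ∧ (C.card : ℕ∞) = n}.Nonempty := by
    by_contra hempty
    rw [Set.not_nonempty_iff_eq_empty] at hempty
    rw [coveringNumber, hempty] at h
    simp at h
  have hmem := csInf_mem hne
  rw [← coveringNumber, h] at hmem
  obtain ⟨C, hCF, hcov, hcard⟩ := hmem
  exact ⟨C, hCF, hcov, by exact_mod_cast hcard⟩

lemma Fin.sum_le_one_of_le_one_div {N : ℕ} {x : Fin N → ℝ} (h : ∀ k, x k ≤ 1 / N) :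
    ∑ k, x k ≤ 1 := by
  calc ∑ k, x k ≤ ∑ _k : Fin N, (1 / N : ℝ) := Finset.sum_le_sum fun k _ => h k
    _ ≤ 1 := by
      rw [Finset.sum_const, Finset.card_univ, Fintype.card_fin, nsmul_eq_mul, mul_one_div]
      exact div_self_le_one _

lemma EuclideanSpace.norm_le_one_of_abs_le {N : ℕ} {x : EuclideanSpace ℝ (Fin N)}
    (hx : ∀ k, |x k| ≤ 1 / N) : ‖x‖ ≤ 1 := by
  have hN : (1 / N : ℝ) ≤ 1 := by
    rcases N.eq_zero_or_pos with rfl | hN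
    · simp
    · exact div_le_one_of_le₀ (by exact_mod_cast hN) (Nat.cast_nonneg N)
  have hsq : ‖x‖ ^ 2 ≤ 1 := by
    rw [EuclideanSpace.norm_sq_eq]
    refine Fin.sum_le_one_of_le_one_div fun k => ?_
    calc ‖x k‖ ^ 2 ≤ (1 / N : ℝ) ^ 2 := by gcongr; exact hx k
      _ ≤ 1 / (N : ℝ) := pow_le_of_le_one (by positivity) hN two_ne_zero
  exact (sq_le_one_iff₀ (norm_nonneg x)).mp hsq

lemma EuclideanSpace.inner_le_one_of_abs_le {N : ℕ} {x e : EuclideanSpace ℝ (Fin N)}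
    (hx : ∀ k, |x k| ≤ 1 / N) (he : ∀ k, |e k| ≤ 1) : ⟪x, e⟫_ℝ ≤ 1 := by
  rw [PiLp.inner_apply]
  refine Fin.sum_le_one_of_le_one_div fun k => ?_
  calc ⟪x k, e k⟫_ℝ ≤ |x k| * |e k| := by
        rw [Real.inner_apply, ← abs_mul]; exact le_abs_self _
    _ ≤ 1 / N * 1 := by gcongr; exacts [hx k, he k]
    _ = 1 / N := mul_one _

def sampleVector {X : Type*} {N : ℕ} (z : Fin N → X) (h : X → ℝ) : EuclideanSpace ℝ (Fin N) :=
  WithLp.toLp 2 (fun k => h (z k))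

lemma sqrt_sum_sq_sub_le_of_isLeastSquares {X : Type*} {N : ℕ} {z : Fin N → X}
    {f g fstar : X → ℝ} {y : Fin N → ℝ} {L : ℝ} (hL : 1 / 2 ≤ L)
    (hfit : ∑ k, (f (z k) - y k) ^ 2 ≤ ∑ k, (fstar (z k) - y k) ^ 2)
    (hfg : ∀ x, |f x - g x| ≤ 1 / N) (hy : ∀ k, y k ∈ Set.Icc (0 : ℝ) 1)
    (hfstar : ∀ x, fstar x ∈ Set.Icc (0 : ℝ) 1)
    (hg : ⟪sampleVector z g - sampleVector z fstar, WithLp.toLp 2 (fun k => y k - fstar (z k))⟫_ℝ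
      ≤ ‖sampleVector z g - sampleVector z fstar‖ * √(L / 2)) :
    √(∑ k, (f (z k) - fstar (z k)) ^ 2) ≤ 4 * √L := by
  have hnorm : ∀ x : Fin N → ℝ, ‖(WithLp.toLp 2 x : EuclideanSpace ℝ (Fin N))‖ = √(∑ k, x k ^ 2) :=
    fun x => by simp [EuclideanSpace.norm_eq]
  have hfit' := sqrt_le_sqrt hfit
  rw [← hnorm, ← hnorm] at hfit'
  have hclose : ∀ k, |(sampleVector z f - sampleVector z g) k| ≤ 1 / N := fun k => hfg (z k)
  have hnoise : ∀ k, |y k - fstar (z k)| ≤ 1 := fun k =>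
    abs_sub_le_of_nonneg_of_le (hy k).1 (hy k).2 (hfstar (z k)).1 (hfstar (z k)).2
  have hb : 1 / 2 ≤ √(L / 2) := (le_sqrt' (by norm_num)).mpr (by linarith)
  have hconst : 5 * √(L / 2) ≤ 4 * √L := by
    rw [← sqrt_sq (by norm_num : (0 : ℝ) ≤ 5), ← sqrt_sq (by norm_num : (0 : ℝ) ≤ 4),
      ← sqrt_mul (by norm_num), ← sqrt_mul (by norm_num)]
    exact sqrt_le_sqrt (by linarith)
  rw [← hnorm]
  refine le_trans ?_ hconst
  exact norm_sub_le_of_norm_sub_le_of_inner_le (a := sampleVector z f) (p := sampleVector z fstar)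
    (y := WithLp.toLp 2 y) hb hfit' (EuclideanSpace.norm_le_one_of_abs_le hclose)
    (EuclideanSpace.inner_le_one_of_abs_le hclose hnoise) hg

/-- there is an absolute constant `C > 0` such that the least-squares fit `f̃`
to independent `{0,1}`-labels with means `f*(z_k)` satisfies, with probability at least
`1 − δ`, `‖f̃ − f*‖_{Z_N} ≤ C·√(log(2/δ) + log N(F, 1/N))`. -/
theorem stmt1 :
    ∃ C : ℝ, 0 < C ∧
      ∀ (X : Type*) (F : Set (X → ℝ)),
        (∀ f ∈ F, ∀ x, f x ∈ Set.Icc (0 : ℝ) 1) →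
      ∀ fstar ∈ F, ∀ (N : ℕ) (z : Fin N → X) (M : ℕ),
        coveringNumber F (1 / N) = (M : ℕ∞) →
      ∀ (Ω : Type*) (_ : MeasurableSpace Ω) (μ : Measure Ω), IsProbabilityMeasure μ →
      ∀ l : Fin N → Ω → ℝ,
        (∀ k ω, l k ω = 0 ∨ l k ω = 1) →
        (∀ k, Measurable (l k)) →
        iIndepFun l μ →
        (∀ k, ∫ ω, l k ω ∂μ = fstar (z k)) →
      ∀ ftil : Ω → X → ℝ,
        (∀ ω, ftil ω ∈ F ∧ ∀ f ∈ F,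
          (∑ k, (ftil ω (z k) - l k ω) ^ 2) ≤ ∑ k, (f (z k) - l k ω) ^ 2) →
      ∀ δ : ℝ, δ ∈ Set.Ioo (0 : ℝ) 1 →
        ENNReal.ofReal (1 - δ) ≤
          μ {ω | Real.sqrt (∑ k, (ftil ω (z k) - fstar (z k)) ^ 2)
            ≤ C * Real.sqrt (Real.log (2 / δ) + Real.log M)} := by
  refine ⟨4, by norm_num, ?_⟩
  intro X F hF fstar hfstar N z M hM Ω _ μ _ l hl01 hlmeas hlindep hlmean ftil hftil δ ⟨hδ0, hδ1⟩
  obtain ⟨G, -, hGcov, hGcard⟩ := exists_finset_card_eq_of_coveringNumber_eq hM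
  have hMpos : (0 : ℝ) < M := by
    obtain ⟨g, hg, -⟩ := hGcov fstar hfstar
    exact_mod_cast hGcard ▸ Finset.card_pos.mpr ⟨g, hg⟩
  set L := log (2 / δ) + log M
  have hL : 1 / 2 ≤ L := by
    have h2 : log 2 ≤ log (2 / δ) := log_le_log two_pos (by rw [le_div_iff₀ hδ0]; linarith)
    linarith [log_two_gt_d9, log_natCast_nonneg M]
  have hexpL : exp (-L) = δ / (2 * M) := by
    rw [neg_add, exp_add, exp_neg, exp_neg, exp_log (by positivity), exp_log hMpos]
    field_simp
  have hl : ∀ k ω, l k ω ∈ Set.Icc (0 : ℝ) 1 := fun k ω => by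
    rcases hl01 k ω with h | h <;> simp [h]
  have hbad := measure_exists_lt_inner_le_of_iIndepFun hlindep (fun k => (hlmeas k).aemeasurable)
    (fun k => ae_of_all _ (hl k)) G (fun g => sampleVector z g - sampleVector z fstar)
    (by linarith : 0 ≤ L)
  simp only [sub_zero, abs_one, mul_one, hlmean] at hbad
  rw [hexpL, hGcard, ← ENNReal.ofReal_natCast, ← ENNReal.ofReal_mul (Nat.cast_nonneg _),
    mul_div_left_comm, div_mul_cancel_right₀ hMpos.ne'] at hbad
  refine ofReal_one_sub_le_of_measure_compl_le hδ0.le ((measure_mono ?_).trans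
    (hbad.trans (ENNReal.ofReal_le_ofReal (by linarith))))
  intro ω hω
  by_contra hgood
  simp only [Set.mem_ofPred_eq, not_exists, not_and, not_lt] at hgood
  obtain ⟨hfF, hmin⟩ := hftil ω
  obtain ⟨g, hgG, hfg⟩ := hGcov _ hfF
  exact hω (sqrt_sum_sq_sub_le_of_isLeastSquares hL (hmin fstar hfstar) hfg (hl · ω)
    (hF fstar hfstar) (hgood g hgG))
end

section
/- Let F be a class of real-valued functions on a set X, β > 0, and z₁,…,z_N ∈ X an arbitrary sequence; define Z₀ = ∅, Z_k = (z₁,…,z_k), and b_k(x) = sup{|f(x) − f'(x)| : f, f' ∈ F, ‖f − f'‖_{Z_{k−1}} ≤ β}. Then for every ε > 0, the number of indices k ∈ {1,…,N} with b_k(z_k) > ε is at most (β²/ε² + 1)·dim_E(F, ε). -/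
/-!
Greedy bucketing. Put the indices `k` with `b_k(z_k) > ε` one by one into
`m = ⌊β²/ε²⌋ + 1` buckets, appending `z_k` to a bucket on which it is `ε`-independent, so
that every bucket is an `ε`-independent sequence and has length at most `dim_E(F, ε)`.
Such a bucket always exists: `b_k(z_k) > ε` yields `f, f' ∈ F` with `‖f - f'‖_{Z_{k-1}} ≤ β`
and `|f(z_k) - f'(z_k)| > ε`, and if `z_k` were `ε`-dependent on all buckets, each of these
disjoint subsequences of `Z_{k-1}` would carry more than `ε²` of `‖f - f'‖²_{Z_{k-1}} ≤ β²`,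
forcing `m ε² < β²`.
-/

open MeasureTheory

/-- `‖f‖_Z` for a finite sequence `Z` of points: `(Σ_{z∈Z} f(z)²)^{1/2}`. -/
noncomputable def seqNorm {X : Type*} (Z : List X) (f : X → ℝ) : ℝ :=
  Real.sqrt ((Z.map fun z => (f z) ^ 2).sum)

/-- `x` is `ε`-dependent on the finite sequence `Z` with respect to `F`. -/
def EpsDependent {X : Type*} (F : Set (X → ℝ)) (ε : ℝ) (Z : List X) (x : X) : Prop :=
  ∀ f ∈ F, ∀ f' ∈ F, seqNorm Z (fun y => f y - f' y) ≤ ε → |f x - f' x| ≤ ε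

/-- The `ε`-eluder dimension `dim_E(F, ε)`: the length of the longest sequence of points
such that, for some `ε' ≥ ε`, every element is `ε'`-independent of its predecessors. -/
noncomputable def eluderDim {X : Type*} (F : Set (X → ℝ)) (ε : ℝ) : ℕ∞ :=
  sSup {n : ℕ∞ | ∃ L : List X, (L.length : ℕ∞) = n ∧ ∃ ε' ≥ ε,
    ∀ i : Fin L.length, ¬ EpsDependent F ε' (L.take i) (L.get i)}

/-- The bonus function `b(x) = sup{ |f(x) − f'(x)| : f, f' ∈ F, ‖f − f'‖_Z ≤ β }`. -/
noncomputable def bonus {X : Type*} (F : Set (X → ℝ)) (β : ℝ) (Z : List X) (x : X) : ℝ :=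
  sSup {v : ℝ | ∃ f ∈ F, ∃ f' ∈ F, seqNorm Z (fun y => f y - f' y) ≤ β ∧ v = |f x - f' x|}


lemma Multiset.sum_map_le_sum_map_of_le {α M : Type*} [AddCommMonoid M] [PartialOrder M]
    [IsOrderedAddMonoid M] {s t : Multiset α} (f : α → M) (hf : ∀ a, 0 ≤ f a) (h : s ≤ t) :
    (s.map f).sum ≤ (t.map f).sum := by
  obtain ⟨u, rfl⟩ := Multiset.le_iff_exists_add.mp h
  rw [Multiset.map_add, Multiset.sum_add]
  exact le_add_of_nonneg_right (Multiset.sum_nonneg fun _ ha => by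
    obtain ⟨a, -, rfl⟩ := Multiset.mem_map.mp ha
    exact hf a)

def IsEpsIndepSeq {X : Type*} (F : Set (X → ℝ)) (ε : ℝ) (L : List X) : Prop :=
  ∀ i (hi : i < L.length), ¬ EpsDependent F ε (L.take i) L[i]

section Eluder

variable {X : Type*} {F : Set (X → ℝ)} {ε : ℝ}

lemma isEpsIndepSeq_nil : IsEpsIndepSeq F ε [] := nofun

lemma IsEpsIndepSeq.append_singleton {L : List X} {x : X} (hL : IsEpsIndepSeq F ε L)
    (hx : ¬ EpsDependent F ε L x) : IsEpsIndepSeq F ε (L ++ [x]) := by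
  intro i hi
  rw [List.length_append, List.length_singleton] at hi
  rcases Nat.lt_succ_iff_lt_or_eq.mp hi with hi | rfl
  · rw [List.take_append_of_le_length hi.le, List.getElem_append_left hi]
    exact hL i hi
  · simpa using hx

lemma IsEpsIndepSeq.length_le_eluderDim {L : List X} (hL : IsEpsIndepSeq F ε L) :
    (L.length : ℕ∞) ≤ eluderDim F ε :=
  le_sSup ⟨L, rfl, ε, le_rfl, fun i => hL i i.2⟩

lemma exists_lt_abs_sub_of_lt_bonus {β : ℝ} {Z : List X} {x : X} (hε : 0 ≤ ε)
    (h : ε < bonus F β Z x) :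
    ∃ f ∈ F, ∃ f' ∈ F, seqNorm Z (fun y => f y - f' y) ≤ β ∧ ε < |f x - f' x| := by
  by_contra! hle
  refine h.not_ge (Real.sSup_le ?_ hε)
  rintro _ ⟨f, hf, f', hf', hβ, rfl⟩
  exact hle f hf f' hf' hβ

-- `∑ j, ↑(Ls j) ≤ ↑Z` encodes that the `Ls j` are disjoint subsequences of `Z`, up to order.
theorem exists_not_epsDependent_of_lt_bonus {m : ℕ} {β : ℝ} {Z : List X} {x : X}
    (hε : 0 < ε) (hm : β ^ 2 / ε ^ 2 < m) (hb : ε < bonus F β Z x)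
    (Ls : Fin m → List X) (hLs : ∑ j, (Ls j : Multiset X) ≤ Z) :
    ∃ j, ¬ EpsDependent F ε (Ls j) x := by
  obtain ⟨f, hf, f', hf', hZ, hx⟩ := exists_lt_abs_sub_of_lt_bonus hε.le hb
  by_contra! hdep
  set φ : X → ℝ := fun y => (f y - f' y) ^ 2
  have hLs_gt : ∀ j, ε ^ 2 < ((Ls j).map φ).sum := fun j =>
    (Real.lt_sqrt hε.le).mp (lt_of_not_ge fun h => (hdep j f hf f' hf' h).not_gt hx)
  have hmε : m * ε ^ 2 ≤ β ^ 2 := calc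
    m * ε ^ 2 = ∑ _j : Fin m, ε ^ 2 := by simp
    _ ≤ ∑ j, ((Ls j).map φ).sum := Finset.sum_le_sum fun j _ => (hLs_gt j).le
    _ = ((∑ j, (Ls j : Multiset X)).map φ).sum := by
      have h := map_sum (Multiset.sumAddMonoidHom.comp (Multiset.mapAddMonoidHom φ))
        (fun j => (Ls j : Multiset X)) Finset.univ
      simp only [AddMonoidHom.coe_comp, Multiset.coe_sumAddMonoidHom,
        Multiset.coe_mapAddMonoidHom, Function.comp_apply, Multiset.map_coe,
        Multiset.sum_coe] at h
      exact h.symm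
    _ ≤ (Z.map φ).sum := by
      simpa using Multiset.sum_map_le_sum_map_of_le φ (fun _ => sq_nonneg _) hLs
    _ ≤ β ^ 2 := (Real.sqrt_le_iff.mp hZ).2
  rw [div_lt_iff₀ (by positivity)] at hm
  linarith

lemma exists_epsIndepSeqs_append {ι : Type*} [Fintype ι] [DecidableEq ι] {Ls : ι → List X}
    (hLs : ∀ j, IsEpsIndepSeq F ε (Ls j)) {j₀ : ι} {x : X} (hx : ¬ EpsDependent F ε (Ls j₀) x) :
    ∃ Ls' : ι → List X, (∀ j, IsEpsIndepSeq F ε (Ls' j)) ∧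
      ∑ j, (Ls' j : Multiset X) = ∑ j, (Ls j : Multiset X) + {x} ∧
      ∑ j, (Ls' j).length = ∑ j, (Ls j).length + 1 := by
  refine ⟨fun j => Ls j ++ if j = j₀ then [x] else [], fun j => ?_, ?_, ?_⟩
  · by_cases h : j = j₀
    · subst h
      simpa using (hLs j).append_singleton hx
    · simpa [h] using hLs j
  · simp only [← Multiset.coe_add, Finset.sum_add_distrib,
      apply_ite (fun l : List X => (l : Multiset X))]
    simp
  · simp only [List.length_append, Finset.sum_add_distrib, apply_ite List.length]
    simp

theorem exists_epsIndepSeqs_ncard_le {m N : ℕ} (z : Fin N → X) (K : Set (Fin N))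
    (hK : ∀ k ∈ K, ∀ Ls : Fin m → List X,
      ∑ j, (Ls j : Multiset X) ≤ ((List.ofFn z).take k : Multiset X) →
      ∃ j, ¬ EpsDependent F ε (Ls j) (z k)) :
    ∃ Ls : Fin m → List X, (∀ j, IsEpsIndepSeq F ε (Ls j)) ∧ K.ncard ≤ ∑ j, (Ls j).length := by
  suffices h : ∀ n ≤ N, ∃ Ls : Fin m → List X, (∀ j, IsEpsIndepSeq F ε (Ls j)) ∧
      ∑ j, (Ls j : Multiset X) ≤ ((List.ofFn z).take n : Multiset X) ∧
      {k ∈ K | (k : ℕ) < n}.ncard ≤ ∑ j, (Ls j).length by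
    obtain ⟨Ls, hLs, -, hcard⟩ := h N le_rfl
    exact ⟨Ls, hLs, by simpa using hcard⟩
  intro n hn
  induction n with
  | zero => exact ⟨fun _ => [], fun _ => isEpsIndepSeq_nil, by simp, by simp⟩
  | succ n ih =>
    obtain ⟨Ls, hLs, hsub, hcard⟩ := ih (by omega)
    set k : Fin N := ⟨n, hn⟩
    have htake : ((List.ofFn z).take (n + 1) : Multiset X) = (List.ofFn z).take n + {z k} := by
      simp [List.take_add_one, k, show n < N from hn, ← Multiset.coe_add]
    have hprefix : {i ∈ K | (i : ℕ) < n + 1} ⊆ insert k {i ∈ K | (i : ℕ) < n} := by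
      rintro i ⟨hiK, hi⟩
      rcases Nat.lt_succ_iff_lt_or_eq.mp hi with hi | hi
      · exact Or.inr ⟨hiK, hi⟩
      · exact Or.inl (Fin.ext hi)
    by_cases hk : k ∈ K
    · obtain ⟨j₀, hj₀⟩ := hK k hk Ls hsub
      obtain ⟨Ls', hLs', hsum, hlen⟩ := exists_epsIndepSeqs_append hLs hj₀
      refine ⟨Ls', hLs', by rw [hsum, htake]; gcongr, ?_⟩
      calc {i ∈ K | (i : ℕ) < n + 1}.ncard ≤ (insert k {i ∈ K | (i : ℕ) < n}).ncard :=
            Set.ncard_le_ncard hprefix (Set.toFinite _)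
        _ ≤ {i ∈ K | (i : ℕ) < n}.ncard + 1 := Set.ncard_insert_le _ _
        _ ≤ ∑ j, (Ls' j).length := by omega
    · refine ⟨Ls, hLs, htake ▸ le_add_right hsub, le_trans (Set.ncard_le_ncard ?_) hcard⟩
      intro i hi
      rcases hprefix hi with rfl | hi
      · exact absurd hi.1 hk
      · exact hi

end Eluder

theorem stmt2_general (X : Type*) (F : Set (X → ℝ)) (β : ℝ)
    (N : ℕ) (z : Fin N → X) (ε : ℝ) (hε : 0 < ε)
    (D : ℕ) (hdim : eluderDim F ε = (D : ℕ∞)) :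
    ({k : Fin N | ε < bonus F β ((List.ofFn z).take k) (z k)}.ncard : ℝ)
      ≤ (β ^ 2 / ε ^ 2 + 1) * D := by
  set m := ⌊β ^ 2 / ε ^ 2⌋₊ + 1
  have hm : β ^ 2 / ε ^ 2 < m := by
    push_cast [m]
    exact Nat.lt_floor_add_one _
  obtain ⟨Ls, hLs, hcard⟩ := exists_epsIndepSeqs_ncard_le (m := m) z
    {k : Fin N | ε < bonus F β ((List.ofFn z).take k) (z k)}
    fun k hk => exists_not_epsDependent_of_lt_bonus hε hm hk
  have hlen : ∀ j, (Ls j).length ≤ D := fun j => by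
    exact_mod_cast hdim ▸ (hLs j).length_le_eluderDim
  calc _ ≤ ((∑ j, (Ls j).length : ℕ) : ℝ) := by exact_mod_cast hcard
    _ ≤ m * D := by
      exact_mod_cast (Finset.sum_le_card_nsmul _ _ _ fun j _ => hlen j).trans (by simp)
    _ ≤ (β ^ 2 / ε ^ 2 + 1) * D := by
      push_cast [m]
      gcongr
      exact Nat.floor_le (by positivity)

/-- the number of indices `k ∈ {1,…,N}` with `b_k(z_k) > ε` is at most
`(β²/ε² + 1) · dim_E(F, ε)`. -/
theorem stmt2 (X : Type*) (F : Set (X → ℝ)) (β : ℝ) (hβ : 0 < β)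
    (N : ℕ) (z : Fin N → X) (ε : ℝ) (hε : 0 < ε)
    (D : ℕ) (hdim : eluderDim F ε = (D : ℕ∞)) :
    ({k : Fin N | ε < bonus F β ((List.ofFn z).take k) (z k)}.ncard : ℝ)
      ≤ (β ^ 2 / ε ^ 2 + 1) * D :=
  stmt2_general X F β N z ε hε D hdim
end

section
/- Let S and S' be finite sets, A a finite set, d ∈ ℕ, and let φ : S×A → ℝ^d and μ : S' → ℝ^d have all coordinates nonnegative. Suppose that P(s'|s,a) := ⟨φ(s,a), μ(s')⟩ satisfies Σ_{s'∈S'} P(s'|s,a) = 1 for every (s,a) ∈ S×A. Let μ̄ = Σ_{s'∈S'} μ(s') ∈ ℝ^d, define ψ(s,a) ∈ ℝ^d by ψ(s,a)[x] = φ(s,a)[x]·μ̄[x] for x ∈ {1,…,d}, and for each x with μ̄[x] > 0 define ν(x) ∈ ℝ^{S'} by ν(x)[s'] = μ(s')[x]/μ̄[x]. Then: (i) ⟨φ(s,a), μ̄⟩ = 1 for every (s,a), so ψ(s,a) is a probability vector on {1,…,d}; (ii) ν(x) is a probability vector on S' for every x with μ̄[x] > 0; and (iii) Σ_{x : μ̄[x]>0}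 ψ(s,a)[x]·ν(x)[s'] = P(s'|s,a) for all (s,a) ∈ S×A and s' ∈ S'. In other words, any linear transition model with nonnegative features admits a latent-variable (soft state aggregation) representation with d latent states. -/
/-!
Swapping the two sums in `∑ s', ⟨φ(s,a), μ(s')⟩ = 1` gives `⟨φ(s,a), μ̄⟩ = 1`. In
`ψ(s,a)[x] · ν(x)[s']` the factor `μ̄[x]` cancels, leaving `φ(s,a)[x] · μ(s')[x]`; the latent
states with `μ̄[x] = 0` may be dropped from the sum because, by nonnegativity, `μ(s')[x] = 0`
for every `s'` there.
-/

open Finset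

section LatentFactorization

variable {ι S' R : Type*} [Fintype S']

theorem sum_mul_sum_eq_sum_sum_mul [Fintype ι] [NonUnitalNonAssocSemiring R]
    (w : ι → R) (μ : S' → ι → R) :
    ∑ x, w x * ∑ s', μ s' x = ∑ s', ∑ x, w x * μ s' x := by
  simp only [mul_sum]
  exact sum_comm

theorem sum_div_sum_eq_one [DivisionSemiring R] {μ : S' → ι → R} {x : ι}
    (h : ∑ t, μ t x ≠ 0) : ∑ s', μ s' x / ∑ t, μ t x = 1 := by
  rw [← sum_div, div_self h]

variable [Field R] [LinearOrder R] [IsStrictOrderedRing R] {μ : S' → ι → R}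

theorem sum_pos_of_ne_zero (hμ : ∀ s' x, 0 ≤ μ s' x) {s' : S'} {x : ι} (h : μ s' x ≠ 0) :
    0 < ∑ t, μ t x :=
  ((hμ s' x).lt_of_ne' h).trans_le <|
    single_le_sum (fun t _ => hμ t x) (mem_univ s')

theorem sum_filter_pos_mul_sum_mul_div_sum [Fintype ι] (hμ : ∀ s' x, 0 ≤ μ s' x)
    (w : ι → R) (s' : S') :
    ∑ x ∈ univ.filter (fun x => 0 < ∑ t, μ t x),
        w x * (∑ t, μ t x) * (μ s' x / ∑ t, μ t x) = ∑ x, w x * μ s' x := by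
  calc _ = ∑ x ∈ univ.filter (fun x => 0 < ∑ t, μ t x), w x * μ s' x := by
          refine sum_congr rfl fun x hx => ?_
          rw [mul_assoc, mul_div_cancel₀ _ (mem_filter.mp hx).2.ne']
    _ = ∑ x, w x * μ s' x :=
          sum_filter_of_ne fun x _ hx => sum_pos_of_ne_zero hμ (right_ne_zero_of_mul hx)

end LatentFactorization

theorem stmt6_general (S A S' : Type*) [Fintype S'] (d : ℕ)
    (φ : S × A → Fin d → ℝ) (μ : S' → Fin d → ℝ)
    (hφ : ∀ sa x, 0 ≤ φ sa x) (hμ : ∀ s' x, 0 ≤ μ s' x)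
    (P : S × A → S' → ℝ) (hP : P = fun sa s' => ∑ x, φ sa x * μ s' x)
    (hsum : ∀ sa : S × A, ∑ s' : S', P sa s' = 1)
    (μbar : Fin d → ℝ) (hμbar : μbar = fun x => ∑ s' : S', μ s' x)
    (ψ : S × A → Fin d → ℝ) (hψ : ψ = fun sa x => φ sa x * μbar x)
    (ν : Fin d → S' → ℝ) (hν : ν = fun x s' => μ s' x / μbar x) :
    (∀ sa : S × A,
        (∑ x, φ sa x * μbar x) = 1 ∧ (∀ x, 0 ≤ ψ sa x) ∧ (∑ x, ψ sa x) = 1)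
    ∧ (∀ x : Fin d, 0 < μbar x → (∀ s', 0 ≤ ν x s') ∧ (∑ s', ν x s') = 1)
    ∧ (∀ (sa : S × A) (s' : S'),
        (∑ x ∈ Finset.univ.filter fun x => 0 < μbar x, ψ sa x * ν x s') = P sa s') := by
  subst hP hμbar hψ hν
  have hφμbar : ∀ sa, ∑ x, φ sa x * ∑ s', μ s' x = 1 := fun sa =>
    (sum_mul_sum_eq_sum_sum_mul (φ sa) μ).trans (hsum sa)
  have hμbar_nonneg : ∀ x, 0 ≤ ∑ s', μ s' x := fun x => sum_nonneg fun s' _ => hμ s' x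
  refine ⟨fun sa => ⟨hφμbar sa, fun x => mul_nonneg (hφ sa x) (hμbar_nonneg x), hφμbar sa⟩,
    fun x hx => ⟨fun s' => div_nonneg (hμ s' x) hx.le, sum_div_sum_eq_one hx.ne'⟩,
    fun sa s' => sum_filter_pos_mul_sum_mul_div_sum hμ (φ sa) s'⟩

/-- any linear transition model `P(s'|s,a) = ⟨φ(s,a), μ(s')⟩` with nonnegative
features admits a latent-variable (soft state aggregation) representation with `d` latent
states: (i) `⟨φ(s,a), μ̄⟩ = 1` and `ψ(s,a)` is a probability vector on `{1,…,d}`;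
(ii) `ν(x)` is a probability vector on `S'` whenever `μ̄[x] > 0`; and
(iii) `Σ_{x : μ̄[x]>0} ψ(s,a)[x]·ν(x)[s'] = P(s'|s,a)`. -/
theorem stmt6 (S A S' : Type*) [Fintype S] [Fintype A] [Fintype S'] (d : ℕ)
    (φ : S × A → Fin d → ℝ) (μ : S' → Fin d → ℝ)
    (hφ : ∀ sa x, 0 ≤ φ sa x) (hμ : ∀ s' x, 0 ≤ μ s' x)
    (P : S × A → S' → ℝ) (hP : P = fun sa s' => ∑ x, φ sa x * μ s' x)
    (hsum : ∀ sa : S × A, ∑ s' : S', P sa s' = 1)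
    (μbar : Fin d → ℝ) (hμbar : μbar = fun x => ∑ s' : S', μ s' x)
    (ψ : S × A → Fin d → ℝ) (hψ : ψ = fun sa x => φ sa x * μbar x)
    (ν : Fin d → S' → ℝ) (hν : ν = fun x s' => μ s' x / μbar x) :
    (∀ sa : S × A,
        (∑ x, φ sa x * μbar x) = 1 ∧ (∀ x, 0 ≤ ψ sa x) ∧ (∑ x, ψ sa x) = 1)
    ∧ (∀ x : Fin d, 0 < μbar x → (∀ s', 0 ≤ ν x s') ∧ (∑ s', ν x s') = 1)
    ∧ (∀ (sa : S × A) (s' : S'),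
        (∑ x ∈ Finset.univ.filter fun x => 0 < μbar x, ψ sa x * ν x s') = P sa s') :=
  stmt6_general S A S' d φ μ hφ hμ P hP hsum μbar hμbar ψ hψ ν hν
end

section
/- There is an absolute constant C > 0 such that the following holds. Let (F_k)_{k=0}^K be a filtration on a probability space, let X₁,…,X_K be {0,1}-valued random variables with X_k measurable with respect to F_k, and suppose E[X_k | F_{k−1}] ≤ 1/K almost surely for every k ∈ {1,…,K}. Then for any δ ∈ (0,1), with probability at least 1 − δ, Σ_{k=1}^K X_k ≤ C·(1 + log(1/δ)). -/
/-!
For `{0,1}`-valued `x` one has `exp x = 1 + (e - 1) x`, so the hypothesis gives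
`E[exp X_k | F_{k-1}] ≤ 1 + (e - 1)/K`. Peeling off one factor at a time, the product
`exp (X_1 + ⋯ + X_K)` has expectation at most `(1 + (e - 1)/K)^K ≤ e^{e-1} ≤ e²`, and the
exponential Markov inequality bounds `P(Σ X_k ≥ 2 (1 + log (1/δ)))` by `e^{-2 log (1/δ)} ≤ δ`.
-/

open MeasureTheory ProbabilityTheory Finset

lemma Real.exp_eq_one_add_mul_of_eq_zero_or_eq_one {x : ℝ} (hx : x = 0 ∨ x = 1) :
    Real.exp x = 1 + (Real.exp 1 - 1) * x := by
  rcases hx with rfl | rfl <;> simp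

section

variable {Ω : Type*} {m0 : MeasurableSpace Ω} {μ : Measure Ω}

lemma integrable_of_nonneg_of_le [IsFiniteMeasure μ] {f : Ω → ℝ} {C : ℝ} (hf : Measurable f)
    (hf_nonneg : 0 ≤ f) (hf_le : ∀ ω, f ω ≤ C) : Integrable f μ :=
  Integrable.of_bound hf.aestronglyMeasurable C <| .of_forall fun ω => by
    rw [Real.norm_eq_abs, abs_of_nonneg (hf_nonneg ω)]
    exact hf_le ω

lemma integral_mul_le_of_condExp_le {m : MeasurableSpace Ω} {Y Z : Ω → ℝ} {b : ℝ}
    (hm : m ≤ m0) [SigmaFinite (μ.trim hm)] (hY : StronglyMeasurable[m] Y) (hY_nonneg : 0 ≤ Y)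
    (hY_int : Integrable Y μ) (hZ_int : Integrable Z μ) (hYZ_int : Integrable (Y * Z) μ)
    (hZ : ∀ᵐ ω ∂μ, μ[Z | m] ω ≤ b) :
    ∫ ω, Y ω * Z ω ∂μ ≤ b * ∫ ω, Y ω ∂μ := by
  have hpull : μ[Y * Z | m] =ᵐ[μ] Y * μ[Z | m] :=
    condExp_mul_of_stronglyMeasurable_left hY hYZ_int hZ_int
  calc ∫ ω, Y ω * Z ω ∂μ = ∫ ω, μ[Y * Z | m] ω ∂μ := (integral_condExp hm).symm
    _ ≤ ∫ ω, Y ω * b ∂μ := by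
        refine integral_mono_ae integrable_condExp (hY_int.mul_const b) ?_
        filter_upwards [hpull, hZ] with ω hω hωb
        rw [hω, Pi.mul_apply]
        exact mul_le_mul_of_nonneg_left hωb (hY_nonneg ω)
    _ = b * ∫ ω, Y ω ∂μ := by rw [integral_mul_const, mul_comm]

lemma integral_prod_le_pow_of_condExp_le [IsProbabilityMeasure μ] {ℱ : Filtration ℕ m0}
    {g : ℕ → Ω → ℝ} {b M : ℝ} (hb : 0 ≤ b) (n : ℕ)
    (hg_nonneg : ∀ k ∈ Icc 1 n, 0 ≤ g k) (hg_le : ∀ k ∈ Icc 1 n, ∀ ω, g k ω ≤ M)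
    (hg_meas : ∀ k ∈ Icc 1 n, Measurable[ℱ k] (g k))
    (hg_cond : ∀ k ∈ Icc 1 n, ∀ᵐ ω ∂μ, μ[g k | ℱ (k - 1)] ω ≤ b) :
    ∫ ω, ∏ k ∈ Icc 1 n, g k ω ∂μ ≤ b ^ n := by
  induction n with
  | zero => simp
  | succ n ih =>
    have hsub : Icc 1 n ⊆ Icc 1 (n + 1) := Icc_subset_Icc_right n.le_succ
    have hlast : n + 1 ∈ Icc 1 (n + 1) := by simp
    set P : Ω → ℝ := fun ω => ∏ k ∈ Icc 1 n, g k ω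
    have hP_meas : Measurable[ℱ n] P := Finset.measurable_prod _ fun k hk =>
      (hg_meas k (hsub hk)).mono (ℱ.mono (mem_Icc.1 hk).2) le_rfl
    have hP_nonneg : 0 ≤ P := fun ω => prod_nonneg fun k hk => hg_nonneg k (hsub hk) ω
    have hP_le : ∀ ω, P ω ≤ M ^ n := fun ω => by
      simpa using prod_le_prod (fun k hk => hg_nonneg k (hsub hk) ω)
        (fun k hk => hg_le k (hsub hk) ω)
    have hg_meas' : Measurable (g (n + 1)) := (hg_meas _ hlast).mono (ℱ.le _) le_rfl
    have hPg_le : ∀ ω, (P * g (n + 1)) ω ≤ M ^ n * M := fun ω =>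
      mul_le_mul (hP_le ω) (hg_le _ hlast ω) (hg_nonneg _ hlast ω)
        ((hP_nonneg ω).trans (hP_le ω))
    calc ∫ ω, ∏ k ∈ Icc 1 (n + 1), g k ω ∂μ = ∫ ω, P ω * g (n + 1) ω ∂μ := by
          simp only [prod_Icc_succ_top (Nat.le_add_left 1 n), P]
      _ ≤ b * ∫ ω, P ω ∂μ := by
          refine integral_mul_le_of_condExp_le (ℱ.le n) hP_meas.stronglyMeasurable hP_nonneg
            (integrable_of_nonneg_of_le (hP_meas.mono (ℱ.le n) le_rfl) hP_nonneg hP_le)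
            (integrable_of_nonneg_of_le hg_meas' (hg_nonneg _ hlast) (hg_le _ hlast))
            (integrable_of_nonneg_of_le ((hP_meas.mono (ℱ.le n) le_rfl).mul hg_meas')
              (mul_nonneg hP_nonneg (hg_nonneg _ hlast)) hPg_le) ?_
          simpa using hg_cond _ hlast
      _ ≤ b * b ^ n := by
          gcongr
          exact ih (fun k hk => hg_nonneg k (hsub hk)) (fun k hk => hg_le k (hsub hk))
            (fun k hk => hg_meas k (hsub hk)) (fun k hk => hg_cond k (hsub hk))
      _ = b ^ (n + 1) := by ring

lemma condExp_exp_le_of_eq_zero_or_eq_one [IsFiniteMeasure μ] {m : MeasurableSpace Ω}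
    (hm : m ≤ m0) {X : Ω → ℝ} {p : ℝ} (hX : ∀ ω, X ω = 0 ∨ X ω = 1) (hX_meas : Measurable[m0] X)
    (hp : ∀ᵐ ω ∂μ, μ[X | m] ω ≤ p) :
    ∀ᵐ ω ∂μ, μ[fun ω => Real.exp (X ω) | m] ω ≤ 1 + (Real.exp 1 - 1) * p := by
  have hlin : (fun ω => Real.exp (X ω)) = (fun _ => (1 : ℝ)) + (Real.exp 1 - 1) • X := by
    ext ω
    simp [Real.exp_eq_one_add_mul_of_eq_zero_or_eq_one (hX ω)]
  have hX_int : Integrable X μ :=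
    Integrable.of_bound hX_meas.aestronglyMeasurable 1 <| .of_forall fun ω => by
      rcases hX ω with h | h <;> simp [h]
  rw [hlin]
  filter_upwards [condExp_add (integrable_const 1) (hX_int.smul (Real.exp 1 - 1)) m,
    condExp_smul (Real.exp 1 - 1) X m, hp] with ω hadd hsmul hωp
  rw [hadd, Pi.add_apply, condExp_const hm, hsmul, Pi.smul_apply, smul_eq_mul]
  gcongr
  linarith [Real.add_one_le_exp 1]

lemma integral_exp_sum_le_of_condExp_le [IsProbabilityMeasure μ] {ℱ : Filtration ℕ m0}
    {X : ℕ → Ω → ℝ} {K : ℕ} {p : ℝ} (hp : 0 ≤ p)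
    (hX : ∀ k ∈ Icc 1 K, ∀ ω, X k ω = 0 ∨ X k ω = 1)
    (hX_meas : ∀ k ∈ Icc 1 K, Measurable[ℱ k] (X k))
    (hX_cond : ∀ k ∈ Icc 1 K, ∀ᵐ ω ∂μ, μ[X k | ℱ (k - 1)] ω ≤ p) :
    ∫ ω, Real.exp (∑ k ∈ Icc 1 K, X k ω) ∂μ ≤ Real.exp ((Real.exp 1 - 1) * p * K) := by
  have hc : 0 ≤ Real.exp 1 - 1 := by linarith [Real.add_one_le_exp 1]
  simp_rw [Real.exp_sum]
  calc ∫ ω, ∏ k ∈ Icc 1 K, Real.exp (X k ω) ∂μ ≤ (1 + (Real.exp 1 - 1) * p) ^ K := by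
        refine integral_prod_le_pow_of_condExp_le (M := Real.exp 1) (by positivity) K
          (fun k _ ω => (Real.exp_pos _).le) (fun k hk ω => ?_)
          (fun k hk => (hX_meas k hk).exp)
          (fun k hk => condExp_exp_le_of_eq_zero_or_eq_one (ℱ.le _) (hX k hk)
            ((hX_meas k hk).mono (ℱ.le k) le_rfl) (hX_cond k hk))
        rcases hX k hk ω with h | h <;> simp [h]
    _ ≤ Real.exp ((Real.exp 1 - 1) * p) ^ K := by
        gcongr
        linarith [Real.add_one_le_exp ((Real.exp 1 - 1) * p)]
    _ = Real.exp ((Real.exp 1 - 1) * p * K) := by rw [← Real.exp_nat_mul, mul_comm]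

lemma measureReal_le_le_exp_sub_of_integral_exp_le [IsFiniteMeasure μ] {S : Ω → ℝ} {a c : ℝ}
    (h_int : Integrable (fun ω => Real.exp (S ω)) μ) (h : ∫ ω, Real.exp (S ω) ∂μ ≤ Real.exp c) :
    μ.real {ω | a ≤ S ω} ≤ Real.exp (c - a) := by
  calc μ.real {ω | a ≤ S ω} ≤ Real.exp (-1 * a) * mgf S μ 1 :=
        measure_ge_le_exp_mul_mgf a zero_le_one (by simpa using h_int)
    _ ≤ Real.exp (-1 * a) * Real.exp c := by gcongr; simpa [mgf] using h
    _ = Real.exp (c - a) := by rw [← Real.exp_add]; ring_nf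

lemma ofReal_one_sub_le_measure_compl [IsProbabilityMeasure μ] {s : Set Ω} {δ : ℝ}
    (hs : MeasurableSet s) (h : μ.real s ≤ δ) : ENNReal.ofReal (1 - δ) ≤ μ sᶜ := by
  rw [← ofReal_measureReal, probReal_compl_eq_one_sub hs]
  exact ENNReal.ofReal_le_ofReal (by linarith)

end

/-- there is an absolute constant `C > 0` such that for any filtration
`(F_k)_{k=0}^K` and `{0,1}`-valued random variables `X_k`, measurable w.r.t. `F_k`, with
`E[X_k | F_{k−1}] ≤ 1/K` almost surely, for any `δ ∈ (0,1)`, with probability at least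
`1 − δ`, `Σ_{k=1}^K X_k ≤ C·(1 + log(1/δ))`. -/
theorem stmt9 :
    ∃ C : ℝ, 0 < C ∧
      ∀ (Ω : Type*) (m0 : MeasurableSpace Ω) (μ : Measure Ω), IsProbabilityMeasure μ →
      ∀ (K : ℕ) (ℱ : Filtration ℕ m0) (X : ℕ → Ω → ℝ),
        (∀ k ∈ Finset.Icc 1 K, ∀ ω, X k ω = 0 ∨ X k ω = 1) →
        (∀ k ∈ Finset.Icc 1 K, Measurable[ℱ k] (X k)) →
        (∀ k ∈ Finset.Icc 1 K, ∀ᵐ ω ∂μ, (μ[X k | ℱ (k - 1)]) ω ≤ 1 / K) →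
        ∀ δ : ℝ, δ ∈ Set.Ioo (0 : ℝ) 1 →
        ENNReal.ofReal (1 - δ) ≤
          μ {ω | ∑ k ∈ Finset.Icc 1 K, X k ω ≤ C * (1 + Real.log (1 / δ))} := by
  refine ⟨2, two_pos, fun Ω m0 μ _ K ℱ X hX hX_meas hX_cond δ ⟨hδ0, hδ1⟩ => ?_⟩
  set S : Ω → ℝ := fun ω => ∑ k ∈ Icc 1 K, X k ω
  set L := Real.log (1 / δ)
  have hL : 0 < L := Real.log_pos (one_lt_one_div hδ0 hδ1)
  have hS_meas : Measurable S :=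
    Finset.measurable_sum _ fun k hk => (hX_meas k hk).mono (ℱ.le k) le_rfl
  have hS_le : ∀ ω, S ω ≤ K := fun ω => calc
    S ω ≤ ∑ _k ∈ Icc 1 K, (1 : ℝ) := sum_le_sum fun k hk => by
      rcases hX k hk ω with h | h <;> simp [h]
    _ = K := by simp
  have hexp : ∫ ω, Real.exp (S ω) ∂μ ≤ Real.exp 2 := by
    have hK : 1 / (K : ℝ) * K ≤ 1 := by
      rcases K.eq_zero_or_pos with rfl | hK
      · simp
      · rw [one_div_mul_cancel (by positivity)]
    refine (integral_exp_sum_le_of_condExp_le (by positivity) hX hX_meas hX_cond).trans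
      (Real.exp_le_exp.2 ?_)
    nlinarith [Real.exp_one_lt_d9, Real.add_one_le_exp 1]
  have htail : μ.real {ω | 2 * (1 + L) ≤ S ω} ≤ δ := calc
    _ ≤ Real.exp (2 - 2 * (1 + L)) := measureReal_le_le_exp_sub_of_integral_exp_le
        (integrable_of_nonneg_of_le hS_meas.exp (fun ω => (Real.exp_pos _).le)
          fun ω => Real.exp_le_exp.2 (hS_le ω)) hexp
    _ ≤ Real.exp (-L) := Real.exp_le_exp.2 (by linarith)
    _ = δ := by rw [Real.exp_neg, Real.exp_log (by positivity), one_div, inv_inv]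
  refine (ofReal_one_sub_le_measure_compl (measurableSet_le measurable_const hS_meas) htail).trans
    (measure_mono fun ω hω => ?_)
  simp only [Set.mem_compl_iff, Set.mem_ofPred_eq, not_le] at hω
  exact hω.le
end

section
/- Let (D, μ) be a probability space, R a finite set of measurable functions D → {0,1}, r* ∈ R, and let Z₁,…,Z_K be i.i.d. samples from μ. Then for any δ ∈ (0,1), with probability at least 1 − δ, simultaneously for every m ∈ {1,…,K} and every r ∈ R satisfying r(Z_i) = r*(Z_i) for all i ∈ {1,…,m}, it holds that μ({z ∈ D : r(z) ≠ r*(z)}) ≤ (log|R| + log(K/δ))/m. -/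
open MeasureTheory ProbabilityTheory
open scoped ENNReal

/-!
Put `L = log |R| + log (K/δ)`. A hypothesis `r` with risk `ε > L/m` agrees with the target on `m` i.i.d. samples with
probability `(1 - ε)^m ≤ exp(-m ε) < exp(-L) = δ / (K |R|)`. A union bound over the `K` sample
sizes and the `|R|` hypotheses shows that some such bad event occurs with probability at most `δ`.
-/

theorem ENNReal.natCast_mul_ofReal_div_le (n : ℕ) {δ : ℝ} (hδ : 0 ≤ δ) :
    (n : ℝ≥0∞) * ENNReal.ofReal (δ / n) ≤ ENNReal.ofReal δ := by
  rw [← ENNReal.ofReal_natCast, ← ENNReal.ofReal_mul n.cast_nonneg]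
  refine ENNReal.ofReal_le_ofReal ?_
  rcases n.eq_zero_or_pos with rfl | hn
  · simpa using hδ
  · rw [mul_div_cancel₀ _ (by positivity)]

section

variable {Ω D : Type*} [MeasurableSpace Ω] [MeasurableSpace D] {μ : Measure Ω} {ν : Measure D}

theorem ProbabilityTheory.iIndepFun.measure_setOf_forall_mem_eq_pow {ι : Type*} {Z : ι → Ω → D}
    (hind : iIndepFun Z μ) (hZ : ∀ i, Measurable (Z i)) (hlaw : ∀ i, μ.map (Z i) = ν)
    {S : Set D} (hS : MeasurableSet S) (s : Finset ι) :
    μ {ω | ∀ i ∈ s, Z i ω ∈ S} = ν S ^ s.card := by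
  have hinter : {ω | ∀ i ∈ s, Z i ω ∈ S} = ⋂ i ∈ s, Z i ⁻¹' S := by ext; simp
  rw [hinter, hind.meas_biInter fun i _ => ⟨S, hS, rfl⟩,
    Finset.prod_congr rfl fun i _ => by rw [← Measure.map_apply (hZ i) hS, hlaw i],
    Finset.prod_const]

theorem ProbabilityTheory.iIndepFun.measure_setOf_forall_lt_eq_pow {K m : ℕ}
    {Z : Fin K → Ω → D} (hind : iIndepFun Z μ) (hZ : ∀ i, Measurable (Z i))
    (hlaw : ∀ i, μ.map (Z i) = ν) {S : Set D} (hS : MeasurableSet S) (hmK : m ≤ K) :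
    μ {ω | ∀ i : Fin K, (i : ℕ) < m → Z i ω ∈ S} = ν S ^ m := by
  have hset : {ω | ∀ i : Fin K, (i : ℕ) < m → Z i ω ∈ S} =
      {ω | ∀ i ∈ Finset.univ.filter (fun i : Fin K => (i : ℕ) < m), Z i ω ∈ S} := by
    ext; simp
  rw [hset, hind.measure_setOf_forall_mem_eq_pow hZ hlaw hS, Fin.card_filter_val_lt,
    min_eq_right hmK]

theorem prob_pow_le_exp_neg_of_lt_prob_compl [IsProbabilityMeasure ν] {S : Set D}
    (hS : MeasurableSet S) {m : ℕ} (hm : 0 < m) {t : ℝ}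
    (ht : ENNReal.ofReal (t / m) < ν Sᶜ) :
    ν S ^ m ≤ ENNReal.ofReal (Real.exp (-t)) := by
  set ε := ν.real Sᶜ
  have hmR : (0 : ℝ) < m := by exact_mod_cast hm
  have htε : t < m * ε := by
    by_contra! hle
    refine ht.not_ge ?_
    rw [← ofReal_measureReal]
    exact ENNReal.ofReal_le_ofReal ((le_div_iff₀ hmR).mpr (by linarith))
  have hSε : ν.real S = 1 - ε := by
    have := probReal_compl_eq_one_sub (μ := ν) hS
    linarith
  have hε1 : m * ε ≤ m := mul_le_of_le_one_right hmR.le measureReal_le_one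
  rw [← ofReal_measureReal (μ := ν) (s := S), ← ENNReal.ofReal_pow measureReal_nonneg, hSε]
  refine ENNReal.ofReal_le_ofReal ?_
  calc (1 - ε) ^ m = (1 - m * ε / m) ^ m := by rw [mul_div_cancel_left₀ _ hmR.ne']
    _ ≤ Real.exp (-(m * ε)) := Real.one_sub_div_pow_le_exp_neg hε1
    _ ≤ Real.exp (-t) := Real.exp_le_exp.mpr (by linarith)

theorem one_sub_le_measure_setOf_forall_forall_imp [IsProbabilityMeasure μ] {α β : Type*}
    (s : Finset α) (t : Finset β) (P : α → β → Ω → Prop) (Q : α → β → Prop) {c : ℝ≥0∞}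
    (h : ∀ a ∈ s, ∀ b ∈ t, ¬ Q a b → μ {ω | P a b ω} ≤ c) :
    1 - s.card * t.card * c ≤ μ {ω | ∀ a ∈ s, ∀ b ∈ t, P a b ω → Q a b} := by
  set G := {ω | ∀ a ∈ s, ∀ b ∈ t, P a b ω → Q a b}
  have hbad : ∀ a ∈ s, ∀ b ∈ t, μ {ω | P a b ω ∧ ¬ Q a b} ≤ c := by
    intro a ha b hb
    by_cases hQ : Q a b
    · simp [hQ]
    · exact (measure_mono fun ω hω => hω.1).trans (h a ha b hb hQ)
  have hcover : Gᶜ ⊆ ⋃ a ∈ s, ⋃ b ∈ t, {ω | P a b ω ∧ ¬ Q a b} := by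
    intro ω hω
    simp only [G, Set.mem_compl_iff, Set.mem_ofPred_eq, not_forall] at hω
    obtain ⟨a, ha, b, hb, hP, hQ⟩ := hω
    exact Set.mem_biUnion ha (Set.mem_biUnion hb ⟨hP, hQ⟩)
  have hGc : μ Gᶜ ≤ s.card * t.card * c :=
    calc μ Gᶜ ≤ ∑ a ∈ s, ∑ b ∈ t, μ {ω | P a b ω ∧ ¬ Q a b} :=
          (measure_mono hcover).trans <| (measure_biUnion_finset_le _ _).trans <|
            Finset.sum_le_sum fun a _ => measure_biUnion_finset_le _ _
      _ ≤ ∑ a ∈ s, ∑ b ∈ t, c := Finset.sum_le_sum fun a ha => Finset.sum_le_sum (hbad a ha)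
      _ = s.card * t.card * c := by simp [Finset.sum_const, nsmul_eq_mul, mul_assoc]
  refine tsub_le_iff_right.mpr ?_
  calc (1 : ℝ≥0∞) = μ (G ∪ Gᶜ) := by rw [Set.union_compl_self, measure_univ]
    _ ≤ μ G + μ Gᶜ := measure_union_le _ _
    _ ≤ μ G + s.card * t.card * c := by gcongr

end

theorem stmt10_general (D : Type*) [MeasurableSpace D] (μD : Measure D) [IsProbabilityMeasure μD]
    (R : Finset (D → ℝ))
    (hRmeas : ∀ r ∈ R, Measurable r)
    (rstar : D → ℝ) (hrstar : rstar ∈ R)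
    (Ω : Type*) [MeasurableSpace Ω] (μ : Measure Ω) [IsProbabilityMeasure μ]
    (K : ℕ) (Z : Fin K → Ω → D) (hZmeas : ∀ i, Measurable (Z i))
    (hindep : iIndepFun Z μ)
    (hlaw : ∀ i, μ.map (Z i) = μD)
    (δ : ℝ) (hδ : δ ∈ Set.Ioo (0 : ℝ) 1) :
    ENNReal.ofReal (1 - δ) ≤
      μ {ω | ∀ m ∈ Finset.Icc 1 K, ∀ r ∈ R,
        (∀ i : Fin K, (i : ℕ) < m → r (Z i ω) = rstar (Z i ω)) →
        μD {z | r z ≠ rstar z} ≤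
          ENNReal.ofReal ((Real.log R.card + Real.log (K / δ)) / m)} := by
  obtain ⟨hδ0, -⟩ := hδ
  set L := Real.log R.card + Real.log (K / δ)
  have hR : (0 : ℝ) < R.card := by exact_mod_cast Finset.card_pos.mpr ⟨rstar, hrstar⟩
  have hbad : ∀ m ∈ Finset.Icc 1 K, ∀ r ∈ R, ¬ μD {z | r z ≠ rstar z} ≤ ENNReal.ofReal (L / m) →
      μ {ω | ∀ i : Fin K, (i : ℕ) < m → r (Z i ω) = rstar (Z i ω)} ≤
        ENNReal.ofReal (δ / (K * R.card)) := by
    intro m hm r hr hrisk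
    obtain ⟨hm1, hmK⟩ := Finset.mem_Icc.mp hm
    have hK : (0 : ℝ) < K := by exact_mod_cast hm1.trans hmK
    have hS : MeasurableSet {z | r z = rstar z} :=
      measurableSet_eq_fun (hRmeas r hr) (hRmeas rstar hrstar)
    have hexp : Real.exp (-L) = δ / (K * R.card) := by
      rw [Real.exp_neg, Real.exp_add, Real.exp_log hR, Real.exp_log (by positivity)]
      field_simp
    calc _ = μD {z | r z = rstar z} ^ m := hindep.measure_setOf_forall_lt_eq_pow hZmeas hlaw hS hmK
      _ ≤ ENNReal.ofReal (Real.exp (-L)) :=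
        prob_pow_le_exp_neg_of_lt_prob_compl hS hm1 (not_le.mp hrisk)
      _ = _ := by rw [hexp]
  calc ENNReal.ofReal (1 - δ)
      ≤ 1 - (Finset.Icc 1 K).card * R.card * ENNReal.ofReal (δ / (K * R.card)) := by
        rw [ENNReal.ofReal_sub _ hδ0.le, ENNReal.ofReal_one, Nat.card_Icc, add_tsub_cancel_right]
        exact tsub_le_tsub_left (mod_cast ENNReal.natCast_mul_ofReal_div_le (K * R.card) hδ0.le) 1
    _ ≤ _ := one_sub_le_measure_setOf_forall_forall_imp _ _ _ _ hbad

/-- for a finite hypothesis class `R` of `{0,1}`-valued functions containing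
the target `r*`, and i.i.d. samples `Z₁,…,Z_K ~ μ_D`, with probability at least `1 − δ`,
every `r ∈ R` consistent with the first `m` samples has population risk at most
`(log|R| + log(K/δ))/m`, simultaneously for all `m ∈ {1,…,K}`. -/
theorem stmt10 (D : Type*) [MeasurableSpace D] (μD : Measure D) [IsProbabilityMeasure μD]
    (R : Finset (D → ℝ)) (hR01 : ∀ r ∈ R, ∀ z, r z = 0 ∨ r z = 1)
    (hRmeas : ∀ r ∈ R, Measurable r)
    (rstar : D → ℝ) (hrstar : rstar ∈ R)
    (Ω : Type*) [MeasurableSpace Ω] (μ : Measure Ω) [IsProbabilityMeasure μ]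
    (K : ℕ) (Z : Fin K → Ω → D) (hZmeas : ∀ i, Measurable (Z i))
    (hindep : iIndepFun Z μ)
    (hlaw : ∀ i, μ.map (Z i) = μD)
    (δ : ℝ) (hδ : δ ∈ Set.Ioo (0 : ℝ) 1) :
    ENNReal.ofReal (1 - δ) ≤
      μ {ω | ∀ m ∈ Finset.Icc 1 K, ∀ r ∈ R,
        (∀ i : Fin K, (i : ℕ) < m → r (Z i ω) = rstar (Z i ω)) →
        μD {z | r z ≠ rstar z} ≤
          ENNReal.ofReal ((Real.log R.card + Real.log (K / δ)) / m)} :=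
  stmt10_general D μD R hRmeas rstar hrstar Ω μ K Z hZmeas hindep hlaw δ hδ
end

section
/- Consider a finite-horizon tabular MDP with horizon H and transition kernels P_h, and let r̂ = (r̂_h)_{h∈[H]} be any reward function with values in [0,1]. Let Γ_h : S×A → [0,∞) and g_h : S×A → ℝ for h ∈ [H], and define backward recursively V̂_{H+1} ≡ 0, Q̂_h(s,a) = min{ max{ r̂_h(s,a) + g_h(s,a) + Γ_h(s,a), 0 }, H−h+1 }, and V̂_h(s) = max_{a∈A} Q̂_h(s,a). If |g_h(s,a) − (P_h V̂_{h+1})(s,a)| ≤ Γ_h(s,a) for all h ∈ [H] and (s,a) ∈ S×A, then for all h ∈ [H], s ∈ S, a ∈ A: Q̂_h(s,a) ≥ Q_h^*(s,a, r̂) and V̂_h(s) ≥ V_h^*(s, r̂). -/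
variable {S A : Type*}

/-- `Vpol P π r n h s` is the value `V_h^π(s, r)` of policy `π` with `n` remaining stages
`h, …, h+n−1`; with `n = H − h + 1` (1-based stages) this is the finite-horizon value. -/
noncomputable def Vpol [Fintype S] (P : ℕ → S → A → S → ℝ) (π : ℕ → S → A)
    (r : ℕ → S → A → ℝ) : ℕ → ℕ → S → ℝ
  | 0, _, _ => 0
  | n + 1, h, s => r h s (π h s) + ∑ s', P h s (π h s) s' * Vpol P π r n (h + 1) s'

/-- `Q_h^π(s, a, r)` for horizon `H` (1-based stages). -/
noncomputable def Qpol [Fintype S] (P : ℕ → S → A → S → ℝ) (π : ℕ → S → A)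
    (r : ℕ → S → A → ℝ) (H h : ℕ) (s : S) (a : A) : ℝ :=
  r h s a + ∑ s', P h s a s' * Vpol P π r (H - h) (h + 1) s'

/-- Optimal Q-value `Q_h^*(s, a, r) = max_π Q_h^π(s, a, r)`. -/
noncomputable def Qstar [Fintype S] (P : ℕ → S → A → S → ℝ) (r : ℕ → S → A → ℝ)
    (H h : ℕ) (s : S) (a : A) : ℝ :=
  ⨆ π : ℕ → S → A, Qpol P π r H h s a

/-- Optimal value `V_h^*(s, r) = max_π V_h^π(s, r)`. -/
noncomputable def Vstar [Fintype S] (P : ℕ → S → A → S → ℝ) (r : ℕ → S → A → ℝ)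
    (H h : ℕ) (s : S) : ℝ :=
  ⨆ π : ℕ → S → A, Vpol P π r (H + 1 - h) h s

/-- The optimistic Q-function `Q̂_h(s,a) = min{max{r̂_h(s,a) + g_h(s,a) + Γ_h(s,a), 0}, H−h+1}`. -/
noncomputable def Qhat (rhat g Γ : ℕ → S → A → ℝ) (H h : ℕ) (s : S) (a : A) : ℝ :=
  min (max (rhat h s a + g h s a + Γ h s a) 0) ((H - h + 1 : ℕ) : ℝ)

/-- `V̂_h(s) = max_{a∈A} Q̂_h(s,a)` for `h ∈ [H]`, and `V̂_{H+1} ≡ 0`. -/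
noncomputable def Vhat (rhat g Γ : ℕ → S → A → ℝ) (H h : ℕ) (s : S) : ℝ :=
  if h ≤ H then ⨆ a : A, Qhat rhat g Γ H h s a else 0

/-! Optimism by backward induction: the hypothesis on `g` makes `Q̂_h` dominate the Bellman
backup `r̂_h + P_h V̂_{h+1}` (the clipping at `H − h + 1` is harmless because rewards are at most
one and `V̂_{h+1} ≤ H − h`), so every policy's value is below `V̂` stage by stage. -/

open Finset

lemma sum_mul_le_sum_mul_of_le {ι : Type*} [Fintype ι] {p v w : ι → ℝ} (hp : ∀ i, 0 ≤ p i)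
    (hvw : ∀ i, v i ≤ w i) : ∑ i, p i * v i ≤ ∑ i, p i * w i :=
  sum_le_sum fun i _ => mul_le_mul_of_nonneg_left (hvw i) (hp i)

lemma sum_mul_le_of_le {ι : Type*} [Fintype ι] {p v : ι → ℝ} {c : ℝ} (hp0 : ∀ i, 0 ≤ p i)
    (hp1 : ∑ i, p i = 1) (hv : ∀ i, v i ≤ c) : ∑ i, p i * v i ≤ c :=
  calc ∑ i, p i * v i ≤ ∑ i, p i * c := sum_mul_le_sum_mul_of_le hp0 hv
    _ = c := by rw [← sum_mul, hp1, one_mul]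

section Optimism

variable {H h : ℕ} {rhat g Γ : ℕ → S → A → ℝ}

lemma Vhat_le [Nonempty A] (s : S) : Vhat rhat g Γ H h s ≤ ((H + 1 - h : ℕ) : ℝ) := by
  unfold Vhat
  split_ifs with hh
  · refine ciSup_le fun a => (min_le_right _ _).trans_eq ?_
    congr 1
    omega
  · positivity

lemma Qhat_le_Vhat [Finite A] (hh : h ≤ H) (s : S) (a : A) :
    Qhat rhat g Γ H h s a ≤ Vhat rhat g Γ H h s := by
  rw [Vhat, if_pos hh]
  exact le_ciSup (Set.finite_range _).bddAbove a

lemma bellman_le_Qhat [Fintype S] [Nonempty A] {P : ℕ → S → A → S → ℝ} {s : S} {a : A}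
    (hP0 : ∀ s', 0 ≤ P h s a s') (hP1 : ∑ s', P h s a s' = 1) (hr : rhat h s a ≤ 1)
    (hg : ∑ s', P h s a s' * Vhat rhat g Γ H (h + 1) s' ≤ g h s a + Γ h s a) :
    rhat h s a + ∑ s', P h s a s' * Vhat rhat g Γ H (h + 1) s' ≤ Qhat rhat g Γ H h s a := by
  have hV : ∑ s', P h s a s' * Vhat rhat g Γ H (h + 1) s' ≤ ((H - h : ℕ) : ℝ) :=
    sum_mul_le_of_le hP0 hP1 fun s' => (Vhat_le s').trans_eq (by congr 1; omega)
  refine le_min (le_max_of_le_left (by linarith)) ?_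
  push_cast
  linarith

variable [Fintype S] [Fintype A] [Nonempty A] {P : ℕ → S → A → S → ℝ}
  (hP0 : ∀ h s a s', 0 ≤ P h s a s') (hP1 : ∀ h s a, ∑ s', P h s a s' = 1)
  (hr : ∀ h s a, rhat h s a ≤ 1)
  (hg : ∀ h ∈ Icc 1 H, ∀ s a,
    ∑ s', P h s a s' * Vhat rhat g Γ H (h + 1) s' ≤ g h s a + Γ h s a)
include hP0 hP1 hr hg

lemma Vpol_le_Vhat (π : ℕ → S → A) (n : ℕ) :
    ∀ h, 1 ≤ h → n + h = H + 1 → ∀ s, Vpol P π rhat n h s ≤ Vhat rhat g Γ H h s := by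
  induction n with
  | zero =>
    intro h _ hn s
    simp [Vpol, Vhat, show ¬h ≤ H by omega]
  | succ n ih =>
    intro h h1 hn s
    have hH : h ≤ H := by omega
    calc Vpol P π rhat (n + 1) h s
        ≤ rhat h s (π h s) + ∑ s', P h s (π h s) s' * Vhat rhat g Γ H (h + 1) s' :=
          add_le_add_right (sum_mul_le_sum_mul_of_le (hP0 h s _) (ih (h + 1) (by omega)
            (by omega))) _
      _ ≤ Qhat rhat g Γ H h s (π h s) :=
          bellman_le_Qhat (hP0 h s _) (hP1 h s _) (hr h s _) (hg h (mem_Icc.2 ⟨h1, hH⟩) s _)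
      _ ≤ Vhat rhat g Γ H h s := Qhat_le_Vhat hH s _

lemma Qpol_le_Qhat (π : ℕ → S → A) (hh : h ∈ Icc 1 H) (s : S) (a : A) :
    Qpol P π rhat H h s a ≤ Qhat rhat g Γ H h s a := by
  obtain ⟨h1, hH⟩ := mem_Icc.1 hh
  calc Qpol P π rhat H h s a
      ≤ rhat h s a + ∑ s', P h s a s' * Vhat rhat g Γ H (h + 1) s' :=
        add_le_add_right (sum_mul_le_sum_mul_of_le (hP0 h s a)
          (Vpol_le_Vhat hP0 hP1 hr hg π _ _ (by omega) (by omega))) _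
    _ ≤ Qhat rhat g Γ H h s a :=
        bellman_le_Qhat (hP0 h s a) (hP1 h s a) (hr h s a) (hg h hh s a)

end Optimism

theorem stmt13_general [Fintype S] [Fintype A] [Nonempty A]
    (H : ℕ) (P : ℕ → S → A → S → ℝ)
    (hP0 : ∀ h s a s', 0 ≤ P h s a s') (hP1 : ∀ h s a, ∑ s', P h s a s' = 1)
    (rhat : ℕ → S → A → ℝ) (hrhat : ∀ h s a, rhat h s a ∈ Set.Icc (0 : ℝ) 1)
    (Γ : ℕ → S → A → ℝ)
    (g : ℕ → S → A → ℝ)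
    (hg : ∀ h ∈ Finset.Icc 1 H, ∀ (s : S) (a : A),
      |g h s a - ∑ s', P h s a s' * Vhat rhat g Γ H (h + 1) s'| ≤ Γ h s a) :
    ∀ h ∈ Finset.Icc 1 H, ∀ (s : S) (a : A),
      Qstar P rhat H h s a ≤ Qhat rhat g Γ H h s a
      ∧ Vstar P rhat H h s ≤ Vhat rhat g Γ H h s := by
  have hr : ∀ h s a, rhat h s a ≤ 1 := fun h s a => (hrhat h s a).2
  have hg' : ∀ h ∈ Icc 1 H, ∀ s a,
      ∑ s', P h s a s' * Vhat rhat g Γ H (h + 1) s' ≤ g h s a + Γ h s a := fun h hh s a => by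
    linarith [(abs_le.1 (hg h hh s a)).1]
  intro h hh s a
  obtain ⟨h1, hH⟩ := mem_Icc.1 hh
  exact ⟨ciSup_le fun π => Qpol_le_Qhat hP0 hP1 hr hg' π hh s a,
    ciSup_le fun π => Vpol_le_Vhat hP0 hP1 hr hg' π _ h h1 (by omega) s⟩

/-- if `|g_h(s,a) − (P_h V̂_{h+1})(s,a)| ≤ Γ_h(s,a)` everywhere, then the
optimistic values dominate the optimal ones: `Q̂_h(s,a) ≥ Q_h^*(s,a,r̂)` and
`V̂_h(s) ≥ V_h^*(s,r̂)` for all `h ∈ [H]`, `s`, `a`. -/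
theorem stmt13 [Fintype S] [Fintype A] [Nonempty A]
    (H : ℕ) (P : ℕ → S → A → S → ℝ)
    (hP0 : ∀ h s a s', 0 ≤ P h s a s') (hP1 : ∀ h s a, ∑ s', P h s a s' = 1)
    (rhat : ℕ → S → A → ℝ) (hrhat : ∀ h s a, rhat h s a ∈ Set.Icc (0 : ℝ) 1)
    (Γ : ℕ → S → A → ℝ) (hΓ : ∀ h s a, 0 ≤ Γ h s a)
    (g : ℕ → S → A → ℝ)
    (hg : ∀ h ∈ Finset.Icc 1 H, ∀ (s : S) (a : A),
      |g h s a - ∑ s', P h s a s' * Vhat rhat g Γ H (h + 1) s'| ≤ Γ h s a) :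
    ∀ h ∈ Finset.Icc 1 H, ∀ (s : S) (a : A),
      Qstar P rhat H h s a ≤ Qhat rhat g Γ H h s a
      ∧ Vstar P rhat H h s ≤ Vhat rhat g Γ H h s :=
  stmt13_general H P hP0 hP1 rhat hrhat Γ g hg
end

section
/- Let d, k ∈ ℕ, let φ₁,…,φ_k ∈ ℝ^d satisfy ‖φ_τ‖₂ ≤ 1 for all τ, let y₁,…,y_k ∈ ℝ satisfy |y_τ| ≤ H for all τ, and let w = Λ^{−1}·Σ_{τ=1}^k φ_τ y_τ where Λ = I_d + Σ_{τ=1}^k φ_τ φ_τᵀ (i.e., w is the ridge-regression solution w = argmin_{v∈ℝ^d} Σ_{τ=1}^k (vᵀφ_τ − y_τ)² + ‖v‖₂²). Then ‖w‖₂ ≤ 2H√(dk). -/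
/-!
Pairing the normal equations `Λ w = ∑ τ, y τ • φ τ` with `w` gives
`‖w‖² + ∑ τ, (φ τ ⬝ᵥ w)² = ∑ τ, y τ * (φ τ ⬝ᵥ w)`, and by Cauchy–Schwarz the right side is at most
`‖y‖ t` with `t² = ∑ τ, (φ τ ⬝ᵥ w)²`. Hence `‖w‖² ≤ ‖y‖ t - t² ≤ ‖y‖² / 4 ≤ k H² / 4`, which is
well below `(2 H √(d k))²`.
-/

open Matrix

theorem le_sq_div_four_of_add_sq_le_mul {a b t : ℝ} (h : a + t ^ 2 ≤ b * t) : a ≤ b ^ 2 / 4 := by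
  nlinarith [sq_nonneg (2 * t - b)]

section RidgeRegression

variable {ι n : Type*} [Fintype ι] [Fintype n] [DecidableEq n]

def regularizedGram (φ : ι → n → ℝ) : Matrix n n ℝ := 1 + ∑ τ, vecMulVec (φ τ) (φ τ)

theorem regularizedGram_mulVec (φ : ι → n → ℝ) (x : n → ℝ) :
    regularizedGram φ *ᵥ x = x + ∑ τ, (φ τ ⬝ᵥ x) • φ τ := by
  simp [regularizedGram, add_mulVec, sum_mulVec, vecMulVec_mulVec]

theorem posDef_regularizedGram (φ : ι → n → ℝ) : (regularizedGram φ).PosDef :=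
  PosDef.one.add_posSemidef <| posSemidef_sum _ fun τ _ => by
    simpa using posSemidef_vecMulVec_self_star (φ τ)

theorem regularizedGram_mulVec_inv_mulVec (φ : ι → n → ℝ) (v : n → ℝ) :
    regularizedGram φ *ᵥ ((regularizedGram φ)⁻¹ *ᵥ v) = v := by
  rw [mulVec_mulVec, mul_nonsing_inv _
    ((isUnit_iff_isUnit_det _).mp (posDef_regularizedGram φ).isUnit), one_mulVec]

theorem dotProduct_self_add_sum_sq_eq_sum_mul {φ : ι → n → ℝ} {y : ι → ℝ} {w : n → ℝ}
    (hw : regularizedGram φ *ᵥ w = ∑ τ, y τ • φ τ) :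
    w ⬝ᵥ w + ∑ τ, (φ τ ⬝ᵥ w) ^ 2 = ∑ τ, y τ * (φ τ ⬝ᵥ w) := by
  simpa [regularizedGram_mulVec, dotProduct_add, dotProduct_sum, dotProduct_smul, sum_dotProduct,
    smul_dotProduct, dotProduct_comm w, sq] using congrArg (w ⬝ᵥ ·) hw

theorem dotProduct_self_le_sum_sq_div_four {φ : ι → n → ℝ} {y : ι → ℝ} {w : n → ℝ}
    (hw : regularizedGram φ *ᵥ w = ∑ τ, y τ • φ τ) :
    w ⬝ᵥ w ≤ (∑ τ, y τ ^ 2) / 4 := by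
  set t := √(∑ τ, (φ τ ⬝ᵥ w) ^ 2)
  have ht : t ^ 2 = ∑ τ, (φ τ ⬝ᵥ w) ^ 2 := Real.sq_sqrt (by positivity)
  have h : w ⬝ᵥ w + t ^ 2 ≤ √(∑ τ, y τ ^ 2) * t := by
    rw [ht, dotProduct_self_add_sum_sq_eq_sum_mul hw]
    exact Real.sum_mul_le_sqrt_mul_sqrt _ _ _
  simpa [Real.sq_sqrt (by positivity : 0 ≤ ∑ τ, y τ ^ 2)] using le_sq_div_four_of_add_sq_le_mul h

end RidgeRegression

theorem stmt16_general (d k : ℕ) (H : ℝ) (φ : Fin k → Fin d → ℝ) (y : Fin k → ℝ)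
    (hy : ∀ τ, |y τ| ≤ H)
    (Λ : Matrix (Fin d) (Fin d) ℝ)
    (hΛ : Λ = 1 + ∑ τ, vecMulVec (φ τ) (φ τ))
    (w : Fin d → ℝ) (hw : w = Λ⁻¹.mulVec (∑ τ, y τ • φ τ)) :
    Real.sqrt (∑ j, (w j) ^ 2) ≤ 2 * H * Real.sqrt ((d : ℝ) * k) := by
  have hΛw : regularizedGram φ *ᵥ w = ∑ τ, y τ • φ τ := by
    rw [hw, hΛ]
    exact regularizedGram_mulVec_inv_mulVec φ _
  have hy2 : ∑ τ, y τ ^ 2 ≤ k * H ^ 2 := by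
    simpa using Finset.sum_le_sum (s := Finset.univ) fun τ _ =>
      sq_le_sq' (abs_le.1 (hy τ)).1 (abs_le.1 (hy τ)).2
  have hw2 : ∑ j, w j ^ 2 ≤ k * H ^ 2 / 4 := by
    simpa [dotProduct, sq] using (dotProduct_self_le_sum_sq_div_four hΛw).trans (by linarith)
  rcases Nat.eq_zero_or_pos k with rfl | hk
  · simpa using Real.sqrt_le_sqrt hw2
  rcases Nat.eq_zero_or_pos d with rfl | hd
  · simp
  have hH : 0 ≤ H := (abs_nonneg _).trans (hy ⟨0, hk⟩)
  have hdk : (k : ℝ) ≤ d * k := le_mul_of_one_le_left (by positivity) (by exact_mod_cast hd)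
  calc √(∑ j, w j ^ 2) ≤ √((2 * H) ^ 2 * (d * k)) := Real.sqrt_le_sqrt (by nlinarith)
    _ = 2 * H * √(d * k) := by rw [Real.sqrt_mul' _ (by positivity), Real.sqrt_sq (by positivity)]

/-- the ridge-regression solution `w = Λ⁻¹·Σ_τ φ_τ y_τ` with
`Λ = I_d + Σ_τ φ_τ φ_τᵀ`, `‖φ_τ‖₂ ≤ 1`, and `|y_τ| ≤ H` satisfies `‖w‖₂ ≤ 2H√(dk)`. -/
theorem stmt16 (d k : ℕ) (H : ℝ) (φ : Fin k → Fin d → ℝ) (y : Fin k → ℝ)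
    (hφ : ∀ τ, Real.sqrt (∑ j, (φ τ j) ^ 2) ≤ 1) (hy : ∀ τ, |y τ| ≤ H)
    (Λ : Matrix (Fin d) (Fin d) ℝ)
    (hΛ : Λ = 1 + ∑ τ, vecMulVec (φ τ) (φ τ))
    (w : Fin d → ℝ) (hw : w = Λ⁻¹.mulVec (∑ τ, y τ • φ τ)) :
    Real.sqrt (∑ j, (w j) ^ 2) ≤ 2 * H * Real.sqrt ((d : ℝ) * k) :=
  stmt16_general d k H φ y hy Λ hΛ w hw
end
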